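/- Let h : C → C be a chain self-map of an R-module chain complex, and T(h) its algebraic mapping torus. Then the induced map h_* : T(h) → T(h) is chain homotopic to the multiplication-by-x map; in particular h_* is a quasi-isomorphism. -/

import Mathlib

/-!
On the cone `X[1] ⊕ X` of a self-map `φ` of `X`, the self-map `(x, y) ↦ (y, 0)` (the cochain
`inl φ` of degree `-1`) is a homotopy from `map φ φ h h` to `map φ φ (h - φ) (h - φ)`, since its
boundary is `diag(φ, φ)`. For `φ = h ⊗ 1 - 1 ⊗ x` the latter is multiplication by the
unit `x`, an isomorphism.
-/

open CategoryTheory LaurentPolynomial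

/-- Degreewise scalar multiplication by `a` as a chain self-map. -/
def smulChainMap {A : Type*} [CommRing A] {ι : Type*} {c : ComplexShape ι} (a : A)
    (K : HomologicalComplex (ModuleCat A) c) : K ⟶ K where
  f n := ModuleCat.ofHom (a • LinearMap.id)
  comm' := by
    intro i j _
    ext x
    show (K.d i j).hom (a • x) = a • (K.d i j).hom x
    exact (K.d i j).hom.map_smul a x

lemma smulChainMap_eq_smul_id {A : Type*} [CommRing A] {ι : Type*} {c : ComplexShape ι} (a : A)
    (K : HomologicalComplex (ModuleCat A) c) : smulChainMap a K = a • 𝟙 K := by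
  ext n x
  simp [smulChainMap]

lemma CategoryTheory.Linear.isIso_smul_id_of_isUnit {R : Type*} [Semiring R] {V : Type*}
    [Category V] [Preadditive V] [Linear R V] (X : V) {r : R} (hr : IsUnit r) :
    IsIso (r • 𝟙 X) := by
  obtain ⟨u, rfl⟩ := hr
  exact ⟨(u⁻¹ : Rˣ) • 𝟙 X, by simp [smul_smul, Units.smul_def],
    by simp [smul_smul, Units.smul_def]⟩

lemma Homotopy.quasiIso_iff {V : Type*} [Category V] [Preadditive V] {ι : Type*}
    {c : ComplexShape ι} {K L : HomologicalComplex V c} {f g : K ⟶ L} (H : Homotopy f g)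
    [∀ i, K.HasHomology i] [∀ i, L.HasHomology i] : QuasiIso f ↔ QuasiIso g := by
  simp only [_root_.quasiIso_iff, quasiIsoAt_iff_isIso_homologyMap, H.homologyMap_eq]

namespace CochainComplex

open HomComplex Limits

variable {R : Type*} [Ring R] {V : Type*} [Category V] [Preadditive V] [Linear R V]

lemma HomComplex.Cochain.ofHom_smul {K L : CochainComplex V ℤ} (r : R) (f : K ⟶ L) :
    Cochain.ofHom (r • f) = r • Cochain.ofHom f := by
  ext p
  simp

variable [HasBinaryBiproducts V]

noncomputable def mappingCone.mapHomotopySmulId {X : CochainComplex V ℤ} (φ h : X ⟶ X) (r : R)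
    (hφ : φ = h - r • 𝟙 X) (comm : φ ≫ h = h ≫ φ) :
    Homotopy (mappingCone.map φ φ h h comm) (r • 𝟙 (mappingCone φ)) :=
  mappingCone.descHomotopy φ _ _ 0 (mappingCone.inl φ)
    (by simp [mappingCone.map, hφ, Cochain.ofHom_smul, Cochain.ofHom_sub])
    (by simp [mappingCone.map, hφ, Cochain.ofHom_smul, Cochain.ofHom_sub])

end CochainComplex

theorem stmt5 (R : Type*) [CommRing R] (C : CochainComplex (ModuleCat R) ℤ) (h : C ⟶ C) :
    ∀ w : ((ModuleCat.extendScalars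
          (algebraMap R (LaurentPolynomial R))).mapHomologicalComplex
            (ComplexShape.up ℤ)).obj C ⟶
        ((ModuleCat.extendScalars
          (algebraMap R (LaurentPolynomial R))).mapHomologicalComplex
            (ComplexShape.up ℤ)).obj C,
      w = ((ModuleCat.extendScalars
            (algebraMap R (LaurentPolynomial R))).mapHomologicalComplex
              (ComplexShape.up ℤ)).map h - smulChainMap (T 1) _ →
      ∀ comm : w ≫ ((ModuleCat.extendScalars
            (algebraMap R (LaurentPolynomial R))).mapHomologicalComplex
              (ComplexShape.up ℤ)).map h =
          ((ModuleCat.extendScalars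
            (algebraMap R (LaurentPolynomial R))).mapHomologicalComplex
              (ComplexShape.up ℤ)).map h ≫ w,
        Nonempty (Homotopy
          (CochainComplex.mappingCone.map w w
            (((ModuleCat.extendScalars
              (algebraMap R (LaurentPolynomial R))).mapHomologicalComplex
                (ComplexShape.up ℤ)).map h)
            (((ModuleCat.extendScalars
              (algebraMap R (LaurentPolynomial R))).mapHomologicalComplex
                (ComplexShape.up ℤ)).map h) comm)
          (smulChainMap (T 1) (CochainComplex.mappingCone w))) ∧
        QuasiIso (CochainComplex.mappingCone.map w w
            (((ModuleCat.extendScalars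
              (algebraMap R (LaurentPolynomial R))).mapHomologicalComplex
                (ComplexShape.up ℤ)).map h)
            (((ModuleCat.extendScalars
              (algebraMap R (LaurentPolynomial R))).mapHomologicalComplex
                (ComplexShape.up ℤ)).map h) comm) := by
  intro w hw comm
  rw [smulChainMap_eq_smul_id] at hw ⊢
  have H := CochainComplex.mappingCone.mapHomotopySmulId w _ (T 1) hw comm
  have : IsIso ((T 1 : R[T;T⁻¹]) • 𝟙 (CochainComplex.mappingCone w)) :=
    Linear.isIso_smul_id_of_isUnit _ (isUnit_T 1)
  exact ⟨⟨H⟩, H.quasiIso_iff.mpr inferInstance⟩
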